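/- Let S be a finite nonempty set, H a finite family of subsets of S such that every element of S belongs to at least one member of H, and k a natural number. Build the network G₀ with vertex set {v_h : h ∈ H} ∪ {v_s : s ∈ S}, an edge {v_h, v_s} exactly when s ∈ h, V_src = {v_h : h ∈ H}, V_ld = {v_s : s ∈ S}, and α = |H| + |S|. For each s ∈ S let V_a^s = {v_h : s ∈ h}. Then there exists H' ⊆ H with |H'| ≤ k and ⋃H' = S if and only if there exists a defense V_d with |V_d| ≤ k such that Σ_{s ∈ S} p(V_a^s, V_d) = 0 (equivalently, the expected payoff of the mixed attack that plays each V_a^s with probability 1/|S| against V_d is zero). -/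

import Mathlib

open scoped Classical

noncomputable section

variable {V : Type*} [Fintype V] [DecidableEq V]

/-- The number of shortest paths between `s` and `t` in `G` (σ_G(s,t)). -/
def numSP (G : SimpleGraph V) (s t : V) : ℕ :=
  Nat.card {w : G.Walk s t // w.length = G.dist s t}

/-- The number of shortest paths between `s` and `t` in `G` passing through edge `e`
(σ_G(s,t | e)). -/
def numSPthru (G : SimpleGraph V) (s t : V) (e : Sym2 V) : ℕ :=
  Nat.card {w : G.Walk s t // w.length = G.dist s t ∧ e ∈ w.edges}

/-- `N_G(t)`: the vertices of `Vsrc \ {t}` reachable from `t` in `G` at minimum distance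
from `t`. -/
def nearestSources (Vsrc : Finset V) (G : SimpleGraph V) (t : V) : Finset V :=
  ((Vsrc.erase t).filter (fun s => G.Reachable t s)).filter
    (fun s => ∀ s' ∈ (Vsrc.erase t).filter (fun s'' => G.Reachable t s''),
      G.dist t s ≤ G.dist t s')

/-- The load of edge `e` in `G`:
`load_G(e) = Σ_{t ∈ Vld} Σ_{s ∈ N_G(t)} σ_G(s,t|e) / (|N_G(t)|·σ_G(s,t))`. -/
def eload (Vsrc Vld : Finset V) (G : SimpleGraph V) (e : Sym2 V) : ℝ :=
  ∑ t ∈ Vld, ∑ s ∈ nearestSources Vsrc G t,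
    (numSPthru G s t e : ℝ) / (((nearestSources Vsrc G t).card : ℝ) * (numSP G s t : ℝ))

/-- The failure operator: removes every edge whose current load exceeds its capacity
`c_e = (1+α)·load_{G₀}(e)`. -/
def Fop (Vsrc Vld : Finset V) (G0 : SimpleGraph V) (α : ℝ) (G : SimpleGraph V) :
    SimpleGraph V where
  Adj u v := G.Adj u v ∧ eload Vsrc Vld G s(u, v) ≤ (1 + α) * eload Vsrc Vld G0 s(u, v)
  symm := by
    constructor
    intro u v h
    refine ⟨h.1.symm, ?_⟩
    rw [Sym2.eq_swap]
    exact h.2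
  loopless := ⟨fun v h => G.loopless.irrefl v h.1⟩

/-- `F*(G)`: the fixed point reached by iterating the failure operator (reached after at
most `|E|+1 ≤ (card V)^2` applications, since each non-trivial application removes an edge). -/
def Fstar (Vsrc Vld : Finset V) (G0 : SimpleGraph V) (α : ℝ) (G : SimpleGraph V) :
    SimpleGraph V :=
  (Fop Vsrc Vld G0 α)^[Fintype.card V ^ 2] G

/-- `G − S`: the (induced) subgraph obtained by deleting the vertices of `S`. -/
def deleteVerts (G : SimpleGraph V) (S : Finset V) : SimpleGraph V where
  Adj u v := G.Adj u v ∧ u ∉ S ∧ v ∉ S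
  symm := ⟨fun u v h => ⟨h.1.symm, h.2.2, h.2.1⟩⟩
  loopless := ⟨fun v h => G.loopless.irrefl v h.1⟩

/-- `disc(G)`: the number of load nodes from which no source (other than itself) is
reachable in `G`. -/
def disc (Vsrc Vld : Finset V) (G : SimpleGraph V) : ℕ :=
  (Vld.filter (fun t => ∀ s ∈ Vsrc, s ≠ t → ¬ G.Reachable t s)).card

/-- The payoff `p(V_a,V_d) = disc(F*(G₀ − (V_a \ V_d)))`. -/
def payoff (Vsrc Vld : Finset V) (G0 : SimpleGraph V) (α : ℝ) (Va Vd : Finset V) : ℕ :=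
  disc Vsrc Vld (Fstar Vsrc Vld G0 α (deleteVerts G0 (Va \ Vd)))

/-- The bipartite network of the set-cover reduction: a source vertex `Sum.inl h` for each
`h ∈ H`, a load vertex `Sum.inr s` for each `s ∈ S`, with an edge `{v_h, v_s}` exactly when
`s ∈ h`. -/
def coverGraph {S : Type*} [Fintype S] [DecidableEq S] (H : Finset (Finset S)) :
    SimpleGraph (Finset S ⊕ S) :=
  SimpleGraph.fromRel (fun u v => ∃ h ∈ H, ∃ s ∈ h, u = Sum.inl h ∧ v = Sum.inr s)

/-!
With `α = |H| + |S|` the cascade never removes an edge. Each load node is adjacent only to sources,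
so its nearest sources are its neighbours and it splits one unit of load evenly over the edges to
them: in any subgraph of `G₀` an edge carries load at most `1`. In `G₀` itself the edge `v_s v_h`
carries at least `1 / |N(v_s)| ≥ 1 / |H|`, so its capacity is at least `(1 + α) / |H| ≥ 1`.
Hence `F*` is the identity, `p(V_a^s, V_d) = 0` says that every element keeps an undeleted set
containing it, and for the attack `V_a^s` this means that some set containing `s` is defended.
-/

namespace SimpleGraph

variable {V : Type*} {G : SimpleGraph V}

theorem Walk.eq_toWalk_of_length_eq_one {s t : V} (h : G.Adj s t) {p : G.Walk s t}
    (hp : p.length = 1) : p = h.toWalk := by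
  cases p with
  | nil => simp at hp
  | cons _ q =>
    cases q with
    | nil => rfl
    | cons _ _ => simp at hp

theorem Reachable.exists_adj {u v : V} (h : G.Reachable u v) (hne : u ≠ v) : ∃ w, G.Adj u w :=
  let ⟨p⟩ := h
  ⟨p.snd, p.adj_snd (Walk.not_nil_of_ne hne)⟩

end SimpleGraph

section

variable {V : Type*} {G : SimpleGraph V} {s t : V}

theorem numSP_of_adj (h : G.Adj s t) : numSP G s t = 1 := by
  rw [numSP, SimpleGraph.dist_eq_one_iff_adj.mpr h, Nat.card_eq_one_iff_unique]
  refine ⟨⟨fun a b => ?_⟩, ⟨⟨h.toWalk, h.length_toWalk⟩⟩⟩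
  rw [Subtype.ext_iff, a.1.eq_toWalk_of_length_eq_one h a.2, b.1.eq_toWalk_of_length_eq_one h b.2]

theorem numSPthru_of_adj (h : G.Adj s t) (e : Sym2 V) :
    numSPthru G s t e = if e = s(s, t) then 1 else 0 := by
  rw [numSPthru, SimpleGraph.dist_eq_one_iff_adj.mpr h]
  have hwalk (w : G.Walk s t) (hw : w.length = 1) : e ∈ w.edges ↔ e = s(s, t) := by
    simp [w.eq_toWalk_of_length_eq_one h hw]
  split_ifs with he
  · rw [Nat.card_eq_one_iff_unique]
    refine ⟨⟨fun a b => ?_⟩, ⟨⟨h.toWalk, h.length_toWalk, (hwalk _ h.length_toWalk).mpr he⟩⟩⟩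
    rw [Subtype.ext_iff, a.1.eq_toWalk_of_length_eq_one h a.2.1,
      b.1.eq_toWalk_of_length_eq_one h b.2.1]
  · have : IsEmpty {w : G.Walk s t // w.length = 1 ∧ e ∈ w.edges} :=
      ⟨fun w => he ((hwalk w.1 w.2.1).mp w.2.2)⟩
    exact Nat.card_of_isEmpty

theorem deleteVerts_le (G : SimpleGraph V) (X : Finset V) : deleteVerts G X ≤ G :=
  fun _ _ h => h.1

end

section Cascade

open Finset

variable {Vsrc Vld : Finset V} {G : SimpleGraph V} {s t v : V} {e : Sym2 V}

theorem nearestSources_subset : nearestSources Vsrc G t ⊆ Vsrc := fun _ hs =>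
  (mem_erase.mp (mem_filter.mp (mem_filter.mp hs).1).1).2

theorem mem_nearestSources_of_adj (hs : s ∈ Vsrc) (h : G.Adj t s) :
    s ∈ nearestSources Vsrc G t := by
  simp only [nearestSources, mem_filter, mem_erase]
  refine ⟨⟨⟨h.ne', hs⟩, h.reachable⟩, fun s' ⟨⟨hs't, _⟩, hs'⟩ => ?_⟩
  rw [SimpleGraph.dist_eq_one_iff_adj.mpr h]
  exact hs'.pos_dist_of_ne hs't.symm

theorem adj_of_mem_nearestSources (hnb : ∀ w, G.Adj t w → w ∈ Vsrc)
    (hs : s ∈ nearestSources Vsrc G t) : G.Adj t s := by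
  simp only [nearestSources, mem_filter, mem_erase] at hs
  obtain ⟨⟨⟨hst, -⟩, hreach⟩, hmin⟩ := hs
  obtain ⟨u, hu⟩ := hreach.exists_adj hst.symm
  have hle : G.dist t s ≤ 1 := by
    simpa [SimpleGraph.dist_eq_one_iff_adj.mpr hu] using hmin u ⟨⟨hu.ne', hnb u hu⟩, hu.reachable⟩
  exact SimpleGraph.dist_eq_one_iff_adj.mp (hle.antisymm (hreach.pos_dist_of_ne hst.symm))

/-- The part of the unit demand of the load node `t` that is routed through `e`. -/
def loadShare (Vsrc : Finset V) (G : SimpleGraph V) (t : V) (e : Sym2 V) : ℝ :=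
  ∑ s ∈ nearestSources Vsrc G t,
    (numSPthru G s t e : ℝ) / (((nearestSources Vsrc G t).card : ℝ) * (numSP G s t : ℝ))

theorem eload_eq_sum_loadShare : eload Vsrc Vld G e = ∑ t ∈ Vld, loadShare Vsrc G t e := rfl

theorem loadShare_nonneg : 0 ≤ loadShare Vsrc G t e :=
  sum_nonneg fun _ _ => by positivity

theorem eload_nonneg : 0 ≤ eload Vsrc Vld G e :=
  sum_nonneg fun _ _ => loadShare_nonneg

theorem loadShare_eq_card_div (hnb : ∀ w, G.Adj t w → w ∈ Vsrc) (e : Sym2 V) :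
    loadShare Vsrc G t e =
      (#{s ∈ nearestSources Vsrc G t | e = s(s, t)} : ℝ) / #(nearestSources Vsrc G t) := by
  rw [← sum_boole, sum_div, loadShare]
  refine sum_congr rfl fun s hs => ?_
  have hst := (adj_of_mem_nearestSources hnb hs).symm
  rw [numSPthru_of_adj hst, numSP_of_adj hst]
  push_cast
  ring

theorem loadShare_le_one (hnb : ∀ w, G.Adj t w → w ∈ Vsrc) : loadShare Vsrc G t e ≤ 1 := by
  rw [loadShare_eq_card_div hnb]
  exact div_le_one_of_le₀ (by exact_mod_cast card_filter_le _ _) (by positivity)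

theorem loadShare_eq_zero (hnb : ∀ w, G.Adj t w → w ∈ Vsrc)
    (he : ∀ s ∈ nearestSources Vsrc G t, e ≠ s(s, t)) : loadShare Vsrc G t e = 0 := by
  rw [loadShare_eq_card_div hnb, filter_false_of_mem he, card_empty, Nat.cast_zero, zero_div]

theorem inv_card_le_loadShare (hnb : ∀ w, G.Adj t w → w ∈ Vsrc)
    (hv : v ∈ nearestSources Vsrc G t) :
    (#(nearestSources Vsrc G t) : ℝ)⁻¹ ≤ loadShare Vsrc G t s(t, v) := by
  rw [loadShare_eq_card_div hnb, ← one_div]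
  have hpos : 0 < #{s ∈ nearestSources Vsrc G t | s(t, v) = s(s, t)} :=
    card_pos.mpr ⟨v, mem_filter.mpr ⟨hv, Sym2.eq_swap⟩⟩
  gcongr
  exact_mod_cast hpos

theorem eload_eq_zero (hnb : ∀ t ∈ Vld, ∀ w, G.Adj t w → w ∈ Vsrc) (he : ∀ t ∈ Vld, t ∉ e) :
    eload Vsrc Vld G e = 0 :=
  sum_eq_zero fun t ht =>
    loadShare_eq_zero (hnb t ht) fun s _ hes => he t ht (hes ▸ Sym2.mem_mk_right s t)

/-- Each load node sends its unit of load to its neighbours, and an edge has at most one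
endpoint that is a load node. -/
theorem eload_le_one (hnb : ∀ t ∈ Vld, ∀ w, G.Adj t w → w ∈ Vsrc \ Vld) (e : Sym2 V) :
    eload Vsrc Vld G e ≤ 1 := by
  have hsrc t (ht : t ∈ Vld) w (h : G.Adj t w) : w ∈ Vsrc := (mem_sdiff.mp (hnb t ht w h)).1
  by_cases hload : ∃ t ∈ Vld, t ∈ e
  · obtain ⟨t, ht, hte⟩ := hload
    obtain ⟨v, rfl⟩ := Sym2.mem_iff_exists.mp hte
    rw [eload_eq_sum_loadShare, sum_eq_single_of_mem t ht]
    · exact loadShare_le_one (hsrc t ht)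
    · refine fun t' ht' ht't => loadShare_eq_zero (hsrc t' ht') fun s hs hes => ?_
      rcases Sym2.eq_iff.mp hes with ⟨rfl, -⟩ | ⟨rfl, -⟩
      · exact (mem_sdiff.mp (hnb t' ht' _ (adj_of_mem_nearestSources (hsrc t' ht') hs))).2 ht
      · exact ht't rfl
  · push Not at hload
    rw [eload_eq_zero hsrc hload]
    exact zero_le_one

theorem inv_card_le_eload (hnb : ∀ w, G.Adj t w → w ∈ Vsrc) (ht : t ∈ Vld) (h : G.Adj t v)
    (hv : v ∈ Vsrc) : (#Vsrc : ℝ)⁻¹ ≤ eload Vsrc Vld G s(t, v) := by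
  have hvN := mem_nearestSources_of_adj hv h
  have hpos : (0 : ℝ) < #(nearestSources Vsrc G t) := by exact_mod_cast card_pos.mpr ⟨v, hvN⟩
  have hle : (#(nearestSources Vsrc G t) : ℝ) ≤ #Vsrc := by
    exact_mod_cast card_le_card nearestSources_subset
  calc (#Vsrc : ℝ)⁻¹ ≤ (#(nearestSources Vsrc G t) : ℝ)⁻¹ := inv_anti₀ hpos hle
    _ ≤ loadShare Vsrc G t s(t, v) := inv_card_le_loadShare hnb hvN
    _ ≤ eload Vsrc Vld G s(t, v) :=
      single_le_sum (f := fun x => loadShare Vsrc G x s(t, v)) (fun _ _ => loadShare_nonneg) ht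

theorem Fop_eq_self {G₀ : SimpleGraph V} {α : ℝ} (hle : G ≤ G₀)
    (hnb : ∀ t ∈ Vld, ∀ w, G₀.Adj t w → w ∈ Vsrc \ Vld) (hα : (#Vsrc : ℝ) ≤ 1 + α) :
    Fop Vsrc Vld G₀ α G = G := by
  have hnbG t (ht : t ∈ Vld) w (h : G.Adj t w) : w ∈ Vsrc \ Vld := hnb t ht w (hle h)
  have hα₀ : 0 ≤ 1 + α := (Nat.cast_nonneg _).trans hα
  have hcap u w (h : G.Adj u w) (hu : u ∈ Vld) :
      eload Vsrc Vld G s(u, w) ≤ (1 + α) * eload Vsrc Vld G₀ s(u, w) := by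
    have hw := (mem_sdiff.mp (hnb u hu w (hle h))).1
    have hsrc : (0 : ℝ) < #Vsrc := by exact_mod_cast card_pos.mpr ⟨w, hw⟩
    calc eload Vsrc Vld G s(u, w) ≤ 1 := eload_le_one hnbG _
      _ ≤ (1 + α) * (#Vsrc : ℝ)⁻¹ := by rwa [← div_eq_mul_inv, one_le_div hsrc]
      _ ≤ (1 + α) * eload Vsrc Vld G₀ s(u, w) :=
        mul_le_mul_of_nonneg_left
          (inv_card_le_eload (fun x hx => (mem_sdiff.mp (hnb u hu x hx)).1) hu (hle h) hw) hα₀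
  ext u w
  refine ⟨And.left, fun h => ⟨h, ?_⟩⟩
  by_cases hu : u ∈ Vld
  · exact hcap u w h hu
  by_cases hw : w ∈ Vld
  · rw [Sym2.eq_swap]
    exact hcap w u h.symm hw
  · have hnot : ∀ t ∈ Vld, t ∉ s(u, w) := fun t ht htuw => by
      rcases Sym2.mem_iff.mp htuw with rfl | rfl <;> contradiction
    rw [eload_eq_zero (fun t ht x hx => (mem_sdiff.mp (hnbG t ht x hx)).1) hnot]
    exact mul_nonneg hα₀ eload_nonneg

theorem Fstar_eq_self {G₀ : SimpleGraph V} {α : ℝ} (hle : G ≤ G₀)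
    (hnb : ∀ t ∈ Vld, ∀ w, G₀.Adj t w → w ∈ Vsrc \ Vld) (hα : (#Vsrc : ℝ) ≤ 1 + α) :
    Fstar Vsrc Vld G₀ α G = G :=
  Function.iterate_fixed (Fop_eq_self hle hnb hα) _

theorem disc_eq_zero_iff :
    disc Vsrc Vld G = 0 ↔ ∀ t ∈ Vld, ∃ s ∈ Vsrc, s ≠ t ∧ G.Reachable t s := by
  simp [disc, filter_eq_empty_iff]

end Cascade

section CoverGraph

open Finset

variable {S : Type*} [DecidableEq S] {H : Finset (Finset S)}

theorem exists_cover_iff_exists_defense (k : ℕ) :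
    (∃ H' ⊆ H, #H' ≤ k ∧ ∀ s : S, ∃ h ∈ H', s ∈ h) ↔
      ∃ Vd : Finset (Finset S ⊕ S), #Vd ≤ k ∧ ∀ s, ∃ h ∈ H, s ∈ h ∧ Sum.inl h ∈ Vd := by
  constructor
  · rintro ⟨H', hH', hk, hcov⟩
    refine ⟨H'.image Sum.inl, card_image_le.trans hk, fun s => ?_⟩
    obtain ⟨h, hh, hsh⟩ := hcov s
    exact ⟨h, hH' hh, hsh, mem_image_of_mem _ hh⟩
  · rintro ⟨Vd, hk, hdef⟩
    refine ⟨H.filter (fun h => Sum.inl h ∈ Vd), filter_subset _ _, ?_, fun s => ?_⟩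
    · refine (card_le_card_of_injOn Sum.inl (fun h hh => ?_) Sum.inl_injective.injOn).trans hk
      exact (mem_filter.mp hh).2
    · obtain ⟨h, hh, hsh, hd⟩ := hdef s
      exact ⟨h, mem_filter.mpr ⟨hh, hd⟩, hsh⟩

variable [Fintype S]

theorem coverGraph_adj_inr {s : S} {w : Finset S ⊕ S} :
    (coverGraph H).Adj (Sum.inr s) w ↔ ∃ h ∈ H, s ∈ h ∧ w = Sum.inl h := by
  rw [coverGraph, SimpleGraph.fromRel_adj]
  constructor
  · rintro ⟨-, ⟨h, -, s', -, hs, -⟩ | ⟨h, hh, s', hs', rfl, hs⟩⟩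
    · exact Sum.inr_ne_inl hs |>.elim
    · exact ⟨h, hh, Sum.inr_injective hs ▸ hs', rfl⟩
  · rintro ⟨h, hh, hs, rfl⟩
    exact ⟨Sum.inr_ne_inl, Or.inr ⟨h, hh, s, hs, rfl, rfl⟩⟩

theorem coverGraph_adj_load {t w : Finset S ⊕ S} (ht : t ∈ univ.image Sum.inr)
    (h : (coverGraph H).Adj t w) : w ∈ H.image Sum.inl \ univ.image Sum.inr := by
  obtain ⟨s, -, rfl⟩ := mem_image.mp ht
  obtain ⟨h, hh, -, rfl⟩ := coverGraph_adj_inr.mp h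
  simp [hh]

theorem disc_deleteVerts_coverGraph_eq_zero_iff (X : Finset (Finset S ⊕ S)) :
    disc (H.image Sum.inl) (univ.image Sum.inr) (deleteVerts (coverGraph H) X) = 0 ↔
      ∀ s, Sum.inr s ∉ X ∧ ∃ h ∈ H, s ∈ h ∧ Sum.inl h ∉ X := by
  simp only [disc_eq_zero_iff, mem_image, mem_univ, true_and, forall_exists_index,
    forall_apply_eq_imp_iff]
  refine forall_congr' fun s => ⟨fun ⟨src, _, hne, hreach⟩ => ?_, fun ⟨hs, h, hh, hsh, hX⟩ => ?_⟩
  · obtain ⟨w, hadj, hsX, hwX⟩ := hreach.exists_adj hne.symm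
    obtain ⟨h, hh, hsh, rfl⟩ := coverGraph_adj_inr.mp hadj
    exact ⟨hsX, h, hh, hsh, hwX⟩
  · exact ⟨Sum.inl h, ⟨h, hh, rfl⟩, Sum.inl_ne_inr,
      SimpleGraph.Adj.reachable ⟨coverGraph_adj_inr.mpr ⟨h, hh, hsh, rfl⟩, hs, hX⟩⟩

theorem payoff_coverGraph_eq_zero_iff {α : ℝ} (hα : (#H : ℝ) ≤ 1 + α)
    (Va Vd : Finset (Finset S ⊕ S)) :
    payoff (H.image Sum.inl) (univ.image Sum.inr) (coverGraph H) α Va Vd = 0 ↔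
      ∀ s, Sum.inr s ∉ Va \ Vd ∧ ∃ h ∈ H, s ∈ h ∧ Sum.inl h ∉ Va \ Vd := by
  rw [payoff, Fstar_eq_self (deleteVerts_le _ _) (fun _ ht _ => coverGraph_adj_load ht)
    (by rwa [card_image_of_injective _ Sum.inl_injective]), disc_deleteVerts_coverGraph_eq_zero_iff]

theorem sum_payoff_coverGraph_eq_zero_iff {α : ℝ} (hα : (#H : ℝ) ≤ 1 + α)
    (Vd : Finset (Finset S ⊕ S)) :
    ∑ s : S, payoff (H.image Sum.inl) (univ.image Sum.inr) (coverGraph H) α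
        ((H.filter (fun h => s ∈ h)).image Sum.inl) Vd = 0 ↔
      ∀ s, ∃ h ∈ H, s ∈ h ∧ Sum.inl h ∈ Vd := by
  simp only [sum_eq_zero_iff, mem_univ, true_implies, payoff_coverGraph_eq_zero_iff hα]
  constructor
  · intro hzero s
    obtain ⟨-, h, hh, hsh, hd⟩ := hzero s s
    exact ⟨h, hh, hsh, by simpa [hh, hsh] using hd⟩
  · intro hdef s s'
    obtain ⟨h, hh, hs'h, hd⟩ := hdef s'
    exact ⟨by simp, h, hh, hs'h, by simp [hd]⟩

end CoverGraph

theorem set_cover_iff_defense_against_mixed_attack_general {S : Type*} [Fintype S] [DecidableEq S]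
    (H : Finset (Finset S)) (k : ℕ) :
    (∃ H' ⊆ H, H'.card ≤ k ∧ ∀ s : S, ∃ h ∈ H', s ∈ h) ↔
      (∃ Vd : Finset (Finset S ⊕ S), Vd.card ≤ k ∧
        ∑ s : S, payoff (H.image Sum.inl) (Finset.univ.image Sum.inr) (coverGraph H)
          ((H.card : ℝ) + (Fintype.card S : ℝ))
          ((H.filter (fun h => s ∈ h)).image Sum.inl) Vd = 0) := by
  have hα : (H.card : ℝ) ≤ 1 + ((H.card : ℝ) + (Fintype.card S : ℝ)) := by
    linarith [(Fintype.card S).cast_nonneg (α := ℝ)]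
  simp only [sum_payoff_coverGraph_eq_zero_iff hα]
  exact exists_cover_iff_exists_defense k

/-- Correctness of the set-cover reduction for the defender's best response to a mixed
attack: with `V_src = {v_h : h ∈ H}`, `V_ld = {v_s : s ∈ S}`, `α = |H| + |S|` and, for each
`s ∈ S`, the attack `V_a^s = {v_h : s ∈ h}`, there is a cover `H' ⊆ H` of `S` with
`|H'| ≤ k` iff there is a defense `V_d` with `|V_d| ≤ k` such that
`Σ_{s ∈ S} p(V_a^s, V_d) = 0` (equivalently, the mixed attack playing each `V_a^s` with
probability `1/|S|` has expected payoff `0` against `V_d`). -/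
theorem set_cover_iff_defense_against_mixed_attack {S : Type*} [Fintype S] [DecidableEq S]
    [Nonempty S] (H : Finset (Finset S)) (hcov : ∀ s : S, ∃ h ∈ H, s ∈ h) (k : ℕ) :
    (∃ H' ⊆ H, H'.card ≤ k ∧ ∀ s : S, ∃ h ∈ H', s ∈ h) ↔
      (∃ Vd : Finset (Finset S ⊕ S), Vd.card ≤ k ∧
        ∑ s : S, payoff (H.image Sum.inl) (Finset.univ.image Sum.inr) (coverGraph H)
          ((H.card : ℝ) + (Fintype.card S : ℝ))
          ((H.filter (fun h => s ∈ h)).image Sum.inl) Vd = 0) :=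
  set_cover_iff_defense_against_mixed_attack_general H k

end
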